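/- arXiv:1904.00939 — 4 statements merged into one kernel-verified Lean document; each statement's English description precedes it below -/
import Mathlib

section
/- Let $X \subseteq \mathbb{R}^m$ and $Y \subseteq \mathbb{R}$ be bounded open sets, $c \in C^2(\bar X \times \bar Y)$, and let $\mu, \nu$ be absolutely continuous probability measures on $\bar X$ and $\bar Y$ respectively. If the minimal mass difference satisfies $D^{min}_\mu(y_0,y_1,k(y_0)) < \nu([y_0,y_1])$ for all $y_0 < y_1$ in $Y$, where $k(y)$ is the mass-splitting level defined by $\mu(X_{\geq}(y,k(y))) = \nu((-\infty,y])$, then the model $(c,\mu,\nu)$ is nested, i.e., for all $y_0 < y_1$ with $\nu([y_0,y_1]) > 0$ one has $X_{\geq}(y_0,k(y_0)) \subseteq X_{>}(y_1,k(y_1))$. -/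
open MeasureTheory Set

noncomputable section

/-- Super-level set `X_{≥}(y,k)` of `∂_y c(·,y)` within `X`. -/
def Xge {m : ℕ} (X : Set (EuclideanSpace ℝ (Fin m)))
    (c : EuclideanSpace ℝ (Fin m) → ℝ → ℝ) (y k : ℝ) : Set (EuclideanSpace ℝ (Fin m)) :=
  {x ∈ X | k ≤ deriv (c x) y}

/-- Level set `X_{=}(y,k)`. -/
def Xeq {m : ℕ} (X : Set (EuclideanSpace ℝ (Fin m)))
    (c : EuclideanSpace ℝ (Fin m) → ℝ → ℝ) (y k : ℝ) : Set (EuclideanSpace ℝ (Fin m)) :=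
  {x ∈ X | deriv (c x) y = k}

/-- Strict super-level set `X_{>}(y,k) = X_{≥}(y,k) \ X_{=}(y,k)`. -/
def Xgt {m : ℕ} (X : Set (EuclideanSpace ℝ (Fin m)))
    (c : EuclideanSpace ℝ (Fin m) → ℝ → ℝ) (y k : ℝ) : Set (EuclideanSpace ℝ (Fin m)) :=
  Xge X c y k \ Xeq X c y k

/-- `k_max(y₀,y₁,k₀) = sup{k : X_{≥}(y₀,k₀) ⊆ X_{≥}(y₁,k)}`. -/
def kmax {m : ℕ} (X : Set (EuclideanSpace ℝ (Fin m)))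
    (c : EuclideanSpace ℝ (Fin m) → ℝ → ℝ) (y0 y1 k0 : ℝ) : ℝ :=
  sSup {k : ℝ | Xge X c y0 k0 ⊆ Xge X c y1 k}

/-- Minimal mass difference `D^{min}_μ(y₀,y₁,k₀)`. -/
def Dmin {m : ℕ} (μ : Measure (EuclideanSpace ℝ (Fin m)))
    (X : Set (EuclideanSpace ℝ (Fin m))) (c : EuclideanSpace ℝ (Fin m) → ℝ → ℝ)
    (y0 y1 k0 : ℝ) : ENNReal :=
  μ (Xge X c y1 (kmax X c y0 y1 k0) \ Xge X c y0 k0)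

/-- The model `(c,μ,ν)` is nested. -/
def Nested {m : ℕ} (ν : Measure ℝ) (X : Set (EuclideanSpace ℝ (Fin m)))
    (c : EuclideanSpace ℝ (Fin m) → ℝ → ℝ) (Y : Set ℝ) (k : ℝ → ℝ) : Prop :=
  ∀ y0 ∈ Y, ∀ y1 ∈ Y, y0 < y1 → 0 < ν (Icc y0 y1) →
    Xge X c y0 (k y0) ⊆ Xgt X c y1 (k y1)

/-! If `k(y₁) ≥ k_max(y₀,y₁,k(y₀))`, then `X_≥(y₁,k(y₁)) ⊆ X_≥(y₁,k_max)`, a set of mass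
`D^min + μ(X_≥(y₀,k(y₀)))`; by the mass-splitting equations `ν((-∞,y₁]) ≤ D^min + ν((-∞,y₀])`,
which contradicts `D^min < ν([y₀,y₁])` because `ν` has no atom at `y₀`. Hence `k(y₁) < k_max`, and
`X_≥(y₀,k(y₀)) ⊆ X_≥(y₁,k_max) ⊆ X_>(y₁,k(y₁))`. -/

theorem measure_Iic_add_measure_Icc {α : Type*} [LinearOrder α] [TopologicalSpace α]
    [OrderClosedTopology α] [MeasurableSpace α] [OpensMeasurableSpace α] {ν : Measure α}
    {a b : α} (ha : ν {a} = 0) (hab : a ≤ b) :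
    ν (Iic a) + ν (Icc a b) = ν (Iic b) := by
  rw [← measure_congr (Ioc_ae_eq_Icc' ha),
    ← measure_union (Iic_disjoint_Ioc le_rfl) measurableSet_Ioc, Iic_union_Ioc_eq_Iic hab]

theorem continuous_deriv_of_contDiff_uncurry {E : Type*} [NormedAddCommGroup E]
    [NormedSpace ℝ E] {c : E → ℝ → ℝ} (hc : ContDiff ℝ 1 (fun p : E × ℝ => c p.1 p.2))
    (y : ℝ) : Continuous fun x => deriv (c x) y := by
  have hderiv : ∀ x, deriv (c x) y = fderiv ℝ (fun p : E × ℝ => c p.1 p.2) (x, y) (0, 1) := by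
    intro x
    have hpath : HasDerivAt (fun t : ℝ => (x, t)) (0, 1) y :=
      (hasDerivAt_const y x).prodMk (hasDerivAt_id y)
    exact (((hc.differentiable one_ne_zero) (x, y)).hasFDerivAt.comp_hasDerivAt y hpath).deriv
  simp only [hderiv]
  exact ((hc.continuous_fderiv one_ne_zero).comp
    (continuous_id.prodMk continuous_const)).clm_apply continuous_const

section LevelSets

variable {m : ℕ} {X : Set (EuclideanSpace ℝ (Fin m))} {c : EuclideanSpace ℝ (Fin m) → ℝ → ℝ}

theorem Xge_anti {y k k' : ℝ} (h : k ≤ k') : Xge X c y k' ⊆ Xge X c y k :=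
  fun _ hx => ⟨hx.1, h.trans hx.2⟩

theorem Xge_subset_Xgt_of_lt {y k k' : ℝ} (h : k < k') : Xge X c y k' ⊆ Xgt X c y k :=
  fun _ hx => ⟨Xge_anti h.le hx, fun heq => (h.trans_le hx.2).ne' heq.2⟩

theorem measurableSet_Xge (hX : MeasurableSet X) {y : ℝ}
    (hcont : Continuous fun x => deriv (c x) y) (k : ℝ) : MeasurableSet (Xge X c y k) :=
  hX.inter (isClosed_Ici.preimage hcont).measurableSet

/-- Without the lower bound the set defining `kmax` may be empty, and `sSup ∅ = 0`. -/
theorem Xge_subset_Xge_kmax {y0 y1 k0 : ℝ}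
    (hbdd : BddBelow ((fun x => deriv (c x) y1) '' X)) :
    Xge X c y0 k0 ⊆ Xge X c y1 (kmax X c y0 y1 k0) := by
  obtain ⟨b, hb⟩ := hbdd
  have hb_sub : Xge X c y0 k0 ⊆ Xge X c y1 b :=
    fun x hx => ⟨hx.1, hb (mem_image_of_mem _ hx.1)⟩
  exact fun x hx => ⟨hx.1, csSup_le ⟨b, hb_sub⟩ fun k hk => (hk hx).2⟩

theorem measure_Xge_kmax {μ : Measure (EuclideanSpace ℝ (Fin m))} {y0 y1 k0 : ℝ}
    (hsub : Xge X c y0 k0 ⊆ Xge X c y1 (kmax X c y0 y1 k0))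
    (hmeas : MeasurableSet (Xge X c y0 k0)) :
    μ (Xge X c y1 (kmax X c y0 y1 k0)) = Dmin μ X c y0 y1 k0 + μ (Xge X c y0 k0) := by
  rw [Dmin, ← measure_sdiff_add_inter _ hmeas, inter_eq_right.mpr hsub]

end LevelSets

theorem stmt0_general {m : ℕ} (X : Set (EuclideanSpace ℝ (Fin m))) (Y : Set ℝ)
    (hXopen : IsOpen X) (hXbdd : Bornology.IsBounded X)
    (c : EuclideanSpace ℝ (Fin m) → ℝ → ℝ)
    (hc : ContDiff ℝ 2 (fun p : EuclideanSpace ℝ (Fin m) × ℝ => c p.1 p.2))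
    (μ : Measure (EuclideanSpace ℝ (Fin m))) (ν : Measure ℝ)
    [IsProbabilityMeasure ν]
    (hνac : ν ≪ volume)
    (k : ℝ → ℝ)
    (hk : ∀ y ∈ Y, μ (Xge X c y (k y)) = ν (Iic y))
    (h : ∀ y0 ∈ Y, ∀ y1 ∈ Y, y0 < y1 →
      Dmin μ X c y0 y1 (k y0) < ν (Icc y0 y1)) :
    Nested ν X c Y k := by
  intro y0 hy0 y1 hy1 h01 _
  have hcont : ∀ y, Continuous fun x => deriv (c x) y :=
    continuous_deriv_of_contDiff_uncurry (hc.of_le (by norm_num))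
  have hbdd : BddBelow ((fun x => deriv (c x) y1) '' X) :=
    (hXbdd.isCompact_closure.bddBelow_image (hcont y1).continuousOn).mono
      (image_mono subset_closure)
  have hsub := Xge_subset_Xge_kmax (y0 := y0) (k0 := k y0) hbdd
  have hlt : k y1 < kmax X c y0 y1 (k y0) := by
    by_contra! hle
    have hmass : ν (Iic y1) ≤ Dmin μ X c y0 y1 (k y0) + ν (Iic y0) := calc
      ν (Iic y1) = μ (Xge X c y1 (k y1)) := (hk y1 hy1).symm
      _ ≤ μ (Xge X c y1 (kmax X c y0 y1 (k y0))) := measure_mono (Xge_anti hle)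
      _ = Dmin μ X c y0 y1 (k y0) + ν (Iic y0) := by
        rw [measure_Xge_kmax hsub (measurableSet_Xge hXopen.measurableSet (hcont y0) _),
          hk y0 hy0]
    have hsplit := measure_Iic_add_measure_Icc (hνac Real.volume_singleton) h01.le
    have hgap := ENNReal.add_lt_add_left (measure_ne_top ν (Iic y0)) (h y0 hy0 y1 hy1 h01)
    rw [hsplit, add_comm] at hgap
    exact (hmass.trans_lt hgap).false
  exact hsub.trans (Xge_subset_Xgt_of_lt hlt)

theorem stmt0 {m : ℕ} (X : Set (EuclideanSpace ℝ (Fin m))) (Y : Set ℝ)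
    (hXopen : IsOpen X) (hXbdd : Bornology.IsBounded X)
    (hYopen : IsOpen Y) (hYbdd : Bornology.IsBounded Y)
    (c : EuclideanSpace ℝ (Fin m) → ℝ → ℝ)
    (hc : ContDiff ℝ 2 (fun p : EuclideanSpace ℝ (Fin m) × ℝ => c p.1 p.2))
    (μ : Measure (EuclideanSpace ℝ (Fin m))) (ν : Measure ℝ)
    [IsProbabilityMeasure μ] [IsProbabilityMeasure ν]
    (hμac : μ ≪ volume) (hνac : ν ≪ volume)
    (hμsupp : μ (closure X) = 1) (hνsupp : ν (closure Y) = 1)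
    (k : ℝ → ℝ)
    (hk : ∀ y ∈ Y, μ (Xge X c y (k y)) = ν (Iic y))
    (h : ∀ y0 ∈ Y, ∀ y1 ∈ Y, y0 < y1 →
      Dmin μ X c y0 y1 (k y0) < ν (Icc y0 y1)) :
    Nested ν X c Y k :=
  stmt0_general X Y hXopen hXbdd c hc μ ν hνac k hk h

end
end

section
/- Let $\mu$ be the uniform probability measure on the quarter disk $X = \{(x_1,x_2) : x_1, x_2 > 0,\ x_1^2 + x_2^2 < 1\}$ (with density $4/\pi$), let $Y = (0,\bar y)$ with $\bar y \leq \pi/2$, and let $c(x,y) = -(x_1 \cos y + x_2 \sin y)$. Then for all $0 < y_0 < y_1 < \bar y$ and all admissible $k_0$, the minimal mass difference satisfies $D^{min}_\mu(y_0,y_1,k_0) \leq \frac{2}{\pi}(y_1 - y_0)$; equivalently, the $\mu$-measure of the wedge $X_{\geq}(y_1,0) \setminus X_{\geq}(y_0,0)$ equals $\frac{2}{\pi}(y_1 - y_0)$ and dominates $D^{min}_\mu(y_0,y_1,k_0)$. -/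
/-!
In polar coordinates `x = (r cos θ, r sin θ)` one has `∂_y c(x, y) = r sin (y - θ)`, so
`X_≥(y₁, 0) \ X_≥(y₀, 0)` is the circular sector `y₀ < θ ≤ y₁`, of Lebesgue measure
`(y₁ - y₀) / 2`. For general `k₀`, pick an apex `P` on a coordinate axis with
`∂_y c(P, y₀) = k₀`. The quarter disk lies on one side of that axis, which gives
`X_≥(y₀, k₀) ⊆ X_≥(y₁, ∂_y c(P, y₁))`, hence `∂_y c(P, y₁) ≤ k_max`; and the set
`X_≥(y₁, ∂_y c(P, y₁)) \ X_≥(y₀, k₀)` translated by `-P` lies in the sector at the origin.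
-/

open MeasureTheory Set Real

noncomputable section

/-- The quarter disk. -/
def quarterDisk : Set (ℝ × ℝ) :=
  {x : ℝ × ℝ | 0 < x.1 ∧ 0 < x.2 ∧ x.1 ^ 2 + x.2 ^ 2 < 1}

/-- Super-level set `X_{≥}(y,k)` of `∂_y c(x,y) = x₁ sin y - x₂ cos y` within the quarter disk. -/
def XgeQD (y k : ℝ) : Set (ℝ × ℝ) :=
  {x ∈ quarterDisk | k ≤ x.1 * Real.sin y - x.2 * Real.cos y}

/-- `k_max(y₀,y₁,k₀)`. -/
def kmaxQD (y0 y1 k0 : ℝ) : ℝ :=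
  sSup {k : ℝ | XgeQD y0 k0 ⊆ XgeQD y1 k}

/-- The uniform probability measure (density `4/π`) on the quarter disk. -/
def muQD : Measure (ℝ × ℝ) :=
  (ENNReal.ofReal (4 / Real.pi)) • (volume.restrict quarterDisk)

/-- Minimal mass difference for the quarter-disk model. -/
def DminQD (y0 y1 k0 : ℝ) : ENNReal :=
  muQD (XgeQD y1 (kmaxQD y0 y1 k0) \ XgeQD y0 k0)

/-- `∂_y c(x, y)`. -/
def costDeriv (y : ℝ) (x : ℝ × ℝ) : ℝ :=
  x.1 * sin y - x.2 * cos y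

lemma mem_XgeQD {y k : ℝ} {x : ℝ × ℝ} :
    x ∈ XgeQD y k ↔ x ∈ quarterDisk ∧ k ≤ costDeriv y x :=
  Iff.rfl

lemma XgeQD_subset_quarterDisk (y k : ℝ) : XgeQD y k ⊆ quarterDisk :=
  sep_subset _ _

lemma XgeQD_anti {y k k' : ℝ} (hk : k ≤ k') : XgeQD y k' ⊆ XgeQD y k :=
  fun _ hx => ⟨hx.1, hk.trans hx.2⟩

lemma measurableSet_XgeQD (y k : ℝ) : MeasurableSet (XgeQD y k) := by
  unfold XgeQD quarterDisk
  measurability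

lemma costDeriv_sub (y : ℝ) (x P : ℝ × ℝ) :
    costDeriv y (x - P) = costDeriv y x - costDeriv y P := by
  simp only [costDeriv, Prod.fst_sub, Prod.snd_sub]
  ring

lemma costDeriv_polarCoord_symm (y : ℝ) (p : ℝ × ℝ) :
    costDeriv y (polarCoord.symm p) = p.1 * sin (y - p.2) := by
  simp only [costDeriv, polarCoord_symm_apply, sin_sub]
  ring

lemma cos_mul_costDeriv_sub_cos_mul_costDeriv (y0 y1 : ℝ) (q : ℝ × ℝ) :
    cos y0 * costDeriv y1 q - cos y1 * costDeriv y0 q = sin (y1 - y0) * q.1 := by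
  simp only [costDeriv, sin_sub]
  ring

lemma sin_mul_costDeriv_sub_sin_mul_costDeriv (y0 y1 : ℝ) (q : ℝ × ℝ) :
    sin y0 * costDeriv y1 q - sin y1 * costDeriv y0 q = sin (y1 - y0) * q.2 := by
  simp only [costDeriv, sin_sub]
  ring

lemma sin_nonneg_iff_of_mem_Ioo {a : ℝ} (h1 : -π < a) (h2 : a < π) : 0 ≤ sin a ↔ 0 ≤ a :=
  ⟨fun hs => not_lt.1 fun ha => (sin_neg_of_neg_of_neg_pi_lt ha h1).not_ge hs,
    fun ha => sin_nonneg_of_nonneg_of_le_pi ha h2.le⟩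

lemma pos_of_costDeriv_nonneg_of_costDeriv_neg {y0 y1 : ℝ} (hy0 : 0 ≤ y0) (h01 : y0 < y1)
    (hy1 : y1 < π / 2) {q : ℝ × ℝ} (h1 : 0 ≤ costDeriv y1 q) (h0 : costDeriv y0 q < 0) :
    0 < q.1 ∧ 0 < q.2 := by
  have hΔ : 0 < sin (y1 - y0) := sin_pos_of_pos_of_lt_pi (by linarith) (by linarith)
  have hs0 : 0 ≤ sin y0 := sin_nonneg_of_nonneg_of_le_pi hy0 (by linarith)
  have hs1 : 0 < sin y1 := sin_pos_of_pos_of_lt_pi (by linarith) (by linarith)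
  have hc0 : 0 ≤ cos y0 := cos_nonneg_of_mem_Icc ⟨by linarith, by linarith⟩
  have hc1 : 0 < cos y1 := cos_pos_of_mem_Ioo ⟨by linarith, hy1⟩
  have e1 := cos_mul_costDeriv_sub_cos_mul_costDeriv y0 y1 q
  have e2 := sin_mul_costDeriv_sub_sin_mul_costDeriv y0 y1 q
  exact ⟨pos_of_mul_pos_right (by nlinarith) hΔ.le,
    pos_of_mul_pos_right (by nlinarith) hΔ.le⟩

lemma costDeriv_nonneg_of_costDeriv_nonneg {y0 y1 : ℝ} (hy0 : 0 < y0) (h01 : y0 ≤ y1)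
    (hy1 : y1 < π / 2) {q : ℝ × ℝ} (hq : 0 ≤ q.1 ∨ 0 ≤ q.2) (h0 : 0 ≤ costDeriv y0 q) :
    0 ≤ costDeriv y1 q := by
  have hΔ : 0 ≤ sin (y1 - y0) := sin_nonneg_of_nonneg_of_le_pi (by linarith) (by linarith)
  rcases hq with hq | hq
  · have hc0 : 0 < cos y0 := cos_pos_of_mem_Ioo ⟨by linarith, by linarith⟩
    have hc1 : 0 ≤ cos y1 := cos_nonneg_of_mem_Icc ⟨by linarith, by linarith⟩
    have e := cos_mul_costDeriv_sub_cos_mul_costDeriv y0 y1 q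
    exact nonneg_of_mul_nonneg_right (by nlinarith) hc0
  · have hs0 : 0 < sin y0 := sin_pos_of_pos_of_lt_pi hy0 (by linarith)
    have hs1 : 0 ≤ sin y1 := sin_nonneg_of_nonneg_of_le_pi (by linarith) (by linarith)
    have e := sin_mul_costDeriv_sub_sin_mul_costDeriv y0 y1 q
    exact nonneg_of_mul_nonneg_right (by nlinarith) hs0

lemma sub_mem_XgeQD_diff {y0 y1 : ℝ} (hy0 : 0 ≤ y0) (h01 : y0 < y1) (hy1 : y1 < π / 2)
    {P x : ℝ × ℝ} (hP1 : 0 ≤ P.1) (hP2 : 0 ≤ P.2)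
    (hx : x ∈ XgeQD y1 (costDeriv y1 P) \ XgeQD y0 (costDeriv y0 P)) :
    x - P ∈ XgeQD y1 0 \ XgeQD y0 0 := by
  obtain ⟨⟨hxD, hx1⟩, hx0⟩ := hx
  have h0 : costDeriv y0 (x - P) < 0 := by
    rw [costDeriv_sub, sub_neg]
    exact lt_of_not_ge fun h => hx0 ⟨hxD, h⟩
  have h1 : 0 ≤ costDeriv y1 (x - P) := by rwa [costDeriv_sub, sub_nonneg]
  obtain ⟨hq1, hq2⟩ := pos_of_costDeriv_nonneg_of_costDeriv_neg hy0 h01 hy1 h1 h0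
  refine ⟨⟨⟨hq1, hq2, ?_⟩, h1⟩, fun h => h0.not_ge h.2⟩
  -- `‖x - P‖ ≤ ‖x‖`, since `x - P` and `P` both lie in the closed first quadrant.
  have hxnorm := hxD.2.2
  simp only [Prod.fst_sub, Prod.snd_sub] at hq1 hq2 ⊢
  nlinarith

lemma XgeQD_subset_XgeQD_of_axis {y0 y1 : ℝ} (hy0 : 0 < y0) (h01 : y0 ≤ y1)
    (hy1 : y1 < π / 2) {P : ℝ × ℝ} (hP : P.1 = 0 ∨ P.2 = 0) :
    XgeQD y0 (costDeriv y0 P) ⊆ XgeQD y1 (costDeriv y1 P) := by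
  rintro x ⟨hx, h0⟩
  refine ⟨hx, show costDeriv y1 P ≤ costDeriv y1 x from ?_⟩
  rw [← sub_nonneg, ← costDeriv_sub]
  refine costDeriv_nonneg_of_costDeriv_nonneg hy0 h01 hy1 ?_
    (by rwa [costDeriv_sub, sub_nonneg])
  rcases hP with hP | hP
  · exact Or.inl (by simp [hP, hx.1.le])
  · exact Or.inr (by simp [hP, hx.2.1.le])

lemma exists_axis_costDeriv_eq {y : ℝ} (hy0 : 0 < y) (hy1 : y < π / 2) (k : ℝ) :
    ∃ P : ℝ × ℝ, 0 ≤ P.1 ∧ 0 ≤ P.2 ∧ (P.1 = 0 ∨ P.2 = 0) ∧ costDeriv y P = k := by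
  have hs : 0 < sin y := sin_pos_of_pos_of_lt_pi hy0 (by linarith)
  have hc : 0 < cos y := cos_pos_of_mem_Ioo ⟨by linarith, hy1⟩
  rcases le_or_gt 0 k with hk | hk
  · refine ⟨(k / sin y, 0), by positivity, le_rfl, Or.inr rfl, ?_⟩
    simp [costDeriv, hs.ne']
  · refine ⟨(0, -k / cos y), le_rfl, div_nonneg (by linarith) hc.le, Or.inl rfl, ?_⟩
    simp [costDeriv, hc.ne']

lemma le_kmaxQD {y0 y1 k0 k : ℝ} (hk0 : ∃ x ∈ quarterDisk, costDeriv y0 x = k0)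
    (h : XgeQD y0 k0 ⊆ XgeQD y1 k) : k ≤ kmaxQD y0 y1 k0 := by
  obtain ⟨x, hx, rfl⟩ := hk0
  exact le_csSup ⟨costDeriv y1 x, fun k' hk' => (hk' ⟨hx, le_rfl⟩).2⟩ h

lemma muQD_apply_of_subset {s : Set (ℝ × ℝ)} (hs : s ⊆ quarterDisk) :
    muQD s = ENNReal.ofReal (4 / π) * volume s := by
  rw [muQD, Measure.smul_apply, smul_eq_mul, Measure.restrict_eq_self _ hs]

lemma muQD_XgeQD_diff_le {y0 y1 : ℝ} (hy0 : 0 ≤ y0) (h01 : y0 < y1) (hy1 : y1 < π / 2)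
    {P : ℝ × ℝ} (hP1 : 0 ≤ P.1) (hP2 : 0 ≤ P.2) :
    muQD (XgeQD y1 (costDeriv y1 P) \ XgeQD y0 (costDeriv y0 P)) ≤
      muQD (XgeQD y1 0 \ XgeQD y0 0) := by
  rw [muQD_apply_of_subset (sdiff_subset.trans (XgeQD_subset_quarterDisk _ _)),
    muQD_apply_of_subset (sdiff_subset.trans (XgeQD_subset_quarterDisk _ _))]
  gcongr _ * ?_
  calc volume (XgeQD y1 (costDeriv y1 P) \ XgeQD y0 (costDeriv y0 P))
      ≤ volume ((fun x => x + -P) ⁻¹' (XgeQD y1 0 \ XgeQD y0 0)) :=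
        measure_mono fun x hx => by
          simpa only [mem_preimage, ← sub_eq_add_neg] using
            sub_mem_XgeQD_diff hy0 h01 hy1 hP1 hP2 hx
    _ = volume (XgeQD y1 0 \ XgeQD y0 0) := measure_preimage_add_right _ _ _

lemma polarCoord_symm_mem_XgeQD_diff_iff {y0 y1 : ℝ} (hy0 : 0 ≤ y0) (h01 : y0 ≤ y1)
    (hy1 : y1 < π / 2) {p : ℝ × ℝ} (hp : p ∈ polarCoord.target) :
    polarCoord.symm p ∈ XgeQD y1 0 \ XgeQD y0 0 ↔ p ∈ Ioo 0 1 ×ˢ Ioc y0 y1 := by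
  obtain ⟨r, θ⟩ := p
  obtain ⟨hr, hθ1, hθ2⟩ : 0 < r ∧ -π < θ ∧ θ < π := by simpa [polarCoord_target] using hp
  have hnorm : (r * cos θ) ^ 2 + (r * sin θ) ^ 2 = r ^ 2 := by
    linear_combination r ^ 2 * sin_sq_add_cos_sq θ
  rw [mem_sdiff, mem_XgeQD, mem_XgeQD, costDeriv_polarCoord_symm, costDeriv_polarCoord_symm]
  simp only [quarterDisk, mem_ofPred_eq, polarCoord_symm_apply, hnorm,
    mul_pos_iff_of_pos_left hr, mul_nonneg_iff_of_pos_left hr, sq_lt_one_iff₀ hr.le, mem_prod,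
    mem_Ioo, mem_Ioc, not_and, not_le]
  constructor
  · rintro ⟨⟨hQ, h1⟩, h0⟩
    have hθ : 0 < θ := by
      by_contra! h
      exact hQ.2.1.not_ge (sin_nonpos_of_nonpos_of_neg_pi_le h hθ1.le)
    refine ⟨⟨hr, hQ.2.2⟩, ?_, ?_⟩
    · by_contra! h
      exact (h0 hQ).not_ge ((sin_nonneg_iff_of_mem_Ioo (by linarith) (by linarith)).2
        (by linarith))
    · linarith [(sin_nonneg_iff_of_mem_Ioo (a := y1 - θ) (by linarith) (by linarith)).1 h1]
  · rintro ⟨⟨-, hr1⟩, hθ0, hθ1⟩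
    have hQ : 0 < cos θ ∧ 0 < sin θ ∧ r < 1 :=
      ⟨cos_pos_of_mem_Ioo ⟨by linarith, by linarith⟩, sin_pos_of_pos_of_lt_pi (by linarith) hθ2,
        hr1⟩
    exact ⟨⟨hQ, sin_nonneg_of_nonneg_of_le_pi (by linarith) (by linarith)⟩,
      fun _ => sin_neg_of_neg_of_neg_pi_lt (by linarith) (by linarith)⟩

lemma lintegral_ofReal_Ioo_zero_one :
    ∫⁻ r in Ioo (0 : ℝ) 1, ENNReal.ofReal r = ENNReal.ofReal (1 / 2) := by
  have h : ∫ r in Ioo (0 : ℝ) 1, r = 1 / 2 := by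
    rw [← integral_Ioc_eq_integral_Ioo, ← intervalIntegral.integral_of_le zero_le_one,
      integral_id]
    norm_num
  have hint : IntegrableOn (fun r : ℝ => r) (Ioo 0 1) :=
    continuous_id.integrableOn_Icc.mono_set Ioo_subset_Icc_self
  rw [← h, ofReal_integral_eq_lintegral_ofReal hint
    (ae_restrict_of_forall_mem measurableSet_Ioo fun r hr => hr.1.le)]

lemma volume_XgeQD_diff_XgeQD {y0 y1 : ℝ} (hy0 : 0 ≤ y0) (h01 : y0 ≤ y1)
    (hy1 : y1 < π / 2) :
    volume (XgeQD y1 0 \ XgeQD y0 0) = ENNReal.ofReal ((y1 - y0) / 2) := by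
  set W := XgeQD y1 0 \ XgeQD y0 0
  set A : Set (ℝ × ℝ) := Ioo 0 1 ×ˢ Ioc y0 y1
  have hA : A ⊆ polarCoord.target := fun p hp =>
    ⟨hp.1.1, by linarith [hp.2.1, pi_pos], by linarith [hp.2.2, pi_pos]⟩
  calc volume W = ∫⁻ p, W.indicator 1 p :=
        (lintegral_indicator_one ((measurableSet_XgeQD _ _).diff (measurableSet_XgeQD _ _))).symm
    _ = ∫⁻ p in polarCoord.target, ENNReal.ofReal p.1 • W.indicator 1 (polarCoord.symm p) :=
        (lintegral_comp_polarCoord_symm _).symm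
    _ = ∫⁻ p in polarCoord.target, A.indicator (fun p => ENNReal.ofReal p.1) p := by
        refine setLIntegral_congr_fun polarCoord.open_target.measurableSet fun p hp => ?_
        have hiff := polarCoord_symm_mem_XgeQD_diff_iff hy0 h01 hy1 hp
        by_cases h : p ∈ A
        · rw [indicator_of_mem h, indicator_of_mem (hiff.2 h), Pi.one_apply, smul_eq_mul,
            mul_one]
        · rw [indicator_of_notMem h, indicator_of_notMem (hiff.not.2 h), smul_zero]
    _ = ∫⁻ p in A, ENNReal.ofReal p.1 := by
        rw [setLIntegral_indicator (measurableSet_Ioo.prod measurableSet_Ioc),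
          inter_eq_left.2 hA]
    _ = (∫⁻ r in Ioo 0 1, ENNReal.ofReal r) * ∫⁻ _ in Ioc y0 y1, 1 := by
        rw [Measure.volume_eq_prod, ← Measure.prod_restrict]
        simpa using lintegral_prod_mul (μ := volume.restrict (Ioo (0 : ℝ) 1))
          (ν := volume.restrict (Ioc y0 y1)) (f := ENNReal.ofReal) (g := fun _ => 1)
          ENNReal.measurable_ofReal.aemeasurable aemeasurable_const
    _ = ENNReal.ofReal ((y1 - y0) / 2) := by
        rw [lintegral_ofReal_Ioo_zero_one, setLIntegral_const, one_mul, Real.volume_Ioc,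
          ← ENNReal.ofReal_mul (by norm_num)]
        ring_nf

lemma muQD_XgeQD_diff_XgeQD {y0 y1 : ℝ} (hy0 : 0 ≤ y0) (h01 : y0 ≤ y1)
    (hy1 : y1 < π / 2) :
    muQD (XgeQD y1 0 \ XgeQD y0 0) = ENNReal.ofReal (2 / π * (y1 - y0)) := by
  rw [muQD_apply_of_subset (sdiff_subset.trans (XgeQD_subset_quarterDisk _ _)),
    volume_XgeQD_diff_XgeQD hy0 h01 hy1, ← ENNReal.ofReal_mul (by positivity)]
  ring_nf

theorem stmt3 (ybar : ℝ) (hybar : ybar ≤ Real.pi / 2)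
    (y0 y1 : ℝ) (hy0 : 0 < y0) (hy01 : y0 < y1) (hy1 : y1 < ybar)
    (k0 : ℝ) (hk0 : ∃ x ∈ quarterDisk, x.1 * Real.sin y0 - x.2 * Real.cos y0 = k0) :
    muQD (XgeQD y1 0 \ XgeQD y0 0) = ENNReal.ofReal (2 / Real.pi * (y1 - y0)) ∧
    DminQD y0 y1 k0 ≤ ENNReal.ofReal (2 / Real.pi * (y1 - y0)) := by
  have hy1' : y1 < π / 2 := hy1.trans_le hybar
  have hsector := muQD_XgeQD_diff_XgeQD hy0.le hy01.le hy1'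
  refine ⟨hsector, ?_⟩
  obtain ⟨P, hP1, hP2, hPaxis, rfl⟩ := exists_axis_costDeriv_eq hy0 (hy01.trans hy1') k0
  have hkmax : costDeriv y1 P ≤ kmaxQD y0 y1 (costDeriv y0 P) :=
    le_kmaxQD hk0 (XgeQD_subset_XgeQD_of_axis hy0 hy01.le hy1' hPaxis)
  calc DminQD y0 y1 (costDeriv y0 P)
      ≤ muQD (XgeQD y1 (costDeriv y1 P) \ XgeQD y0 (costDeriv y0 P)) :=
        measure_mono (sdiff_subset_sdiff_left (XgeQD_anti hkmax))
    _ ≤ muQD (XgeQD y1 0 \ XgeQD y0 0) := muQD_XgeQD_diff_le hy0.le hy01 hy1' hP1 hP2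
    _ = _ := hsector

end
end

section
/- Suppose the cost has pseudo-index form $c(x,y) = C(I(x),y) + B(x)$ with $I : \mathbb{R}^m \to \mathbb{R}$, $C$, $B$ smooth, $DI \neq 0$ everywhere, and $\partial^2 C / \partial I \partial y < 0$. Then for any $y_0 < y_1$ and any $k_0$ in the range of $x \mapsto \partial_y c(x,y_0)$, one has $X_{\geq}(y_0,k_0) = X_{\geq}(y_1, k_{max}(y_0,y_1,k_0))$, and consequently $D^{min}_\mu(y_0,y_1,k_0) = 0$ for every absolutely continuous $\mu$; hence $(c,\mu,\nu)$ is nested for any absolutely continuous marginals $\mu$ and $\nu$ provided $\nu$ charges every nonempty open interval of $Y$. -/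
open MeasureTheory Set

noncomputable section

theorem stmt4 {m : ℕ} (X : Set (EuclideanSpace ℝ (Fin m))) (Y : Set ℝ)
    (hXopen : IsOpen X) (hXbdd : Bornology.IsBounded X)
    (hYopen : IsOpen Y) (hYbdd : Bornology.IsBounded Y)
    (C : ℝ → ℝ → ℝ) (I : EuclideanSpace ℝ (Fin m) → ℝ) (B : EuclideanSpace ℝ (Fin m) → ℝ)
    (hC : ContDiff ℝ (⊤ : ℕ∞) (fun p : ℝ × ℝ => C p.1 p.2))
    (hI : ContDiff ℝ (⊤ : ℕ∞) I) (hB : ContDiff ℝ (⊤ : ℕ∞) B)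
    (hDI : ∀ x, fderiv ℝ I x ≠ 0)
    (hcross : ∀ i y, deriv (fun i' => deriv (fun y' => C i' y') y) i < 0)
    (c : EuclideanSpace ℝ (Fin m) → ℝ → ℝ)
    (hc : ∀ x y, c x y = C (I x) y + B x)
    (μ : Measure (EuclideanSpace ℝ (Fin m))) (ν : Measure ℝ)
    [IsProbabilityMeasure μ] [IsProbabilityMeasure ν]
    (hμac : μ ≪ volume) (hνac : ν ≪ volume)
    (k : ℝ → ℝ)
    (hk : ∀ y ∈ Y, μ (Xge X c y (k y)) = ν (Iic y)) :
    (∀ y0 y1 k0 : ℝ, y0 < y1 → (∃ x ∈ X, deriv (c x) y0 = k0) →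
        Xge X c y0 k0 = Xge X c y1 (kmax X c y0 y1 k0) ∧
        Dmin μ X c y0 y1 k0 = 0) ∧
    ((∀ a b : ℝ, a ∈ Y → b ∈ Y → a < b → 0 < ν (Ioo a b)) →
      Nested ν X c Y k) := by
  -- the partial derivative of C in y
  set g : ℝ → ℝ → ℝ := fun y i => deriv (fun y' => C i y') y with hg
  have hganti : ∀ y, StrictAnti (g y) := fun y =>
    strictAnti_of_deriv_neg (fun i => hcross i y)
  have hderiv : ∀ x y, deriv (c x) y = g y (I x) := by
    intro x y
    have hcx : c x = fun y' => C (I x) y' + B x := funext (hc x)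
    rw [hcx, deriv_add_const]
  -- the two sets
  have hXge : ∀ y kk, Xge X c y kk = {x ∈ X | kk ≤ g y (I x)} := by
    intro y kk
    ext x
    simp only [Xge, mem_setOf_eq, hderiv]
  constructor
  · rintro y0 y1 k0 hy01 ⟨x0, hx0X, hx0⟩
    rw [hderiv] at hx0
    set k1 : ℝ := g y1 (I x0) with hk1
    -- both superlevel sets are the sublevel set of I at I x0
    have h0 : Xge X c y0 k0 = {x ∈ X | I x ≤ I x0} := by
      rw [hXge]; ext x
      simp only [mem_setOf_eq, ← hx0, (hganti y0).le_iff_ge]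
    have h1 : ∀ kk, kk ≤ k1 → Xge X c y0 k0 ⊆ Xge X c y1 kk := by
      intro kk hkk
      rw [h0, hXge]
      rintro x ⟨hxX, hxle⟩
      exact ⟨hxX, hkk.trans ((hganti y1).le_iff_ge.mpr hxle)⟩
    have hx0mem : x0 ∈ Xge X c y0 k0 := by rw [h0]; exact ⟨hx0X, le_refl _⟩
    have hS : {kk : ℝ | Xge X c y0 k0 ⊆ Xge X c y1 kk} = Iic k1 := by
      ext kk
      constructor
      · intro hkk
        have := hkk hx0mem
        rw [hXge] at this
        exact this.2
      · exact fun hkk => h1 kk hkk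
    have hkmax : kmax X c y0 y1 k0 = k1 := by rw [kmax, hS, csSup_Iic]
    have heq : Xge X c y0 k0 = Xge X c y1 (kmax X c y0 y1 k0) := by
      rw [hkmax]
      apply Subset.antisymm (h1 k1 le_rfl)
      rw [h0, hXge]
      rintro x ⟨hxX, hxle⟩
      exact ⟨hxX, (hganti y1).le_iff_ge.mp hxle⟩
    refine ⟨heq, ?_⟩
    rw [Dmin, ← heq, diff_self, measure_empty]
  · intro hν y0 hy0 y1 hy1 hy01 _
    -- the measure of the superlevel set strictly increases
    have hμlt : μ (Xge X c y0 (k y0)) < μ (Xge X c y1 (k y1)) := by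
      rw [hk y0 hy0, hk y1 hy1]
      have hdisj : Disjoint (Iic y0) (Ioo y0 y1) := by
        rw [Set.disjoint_left]
        rintro t (ht : t ≤ y0) ⟨ht1, _⟩
        exact absurd ht (not_le.mpr ht1)
      have hsub : Iic y0 ∪ Ioo y0 y1 ⊆ Iic y1 := by
        rintro t (ht | ht)
        · exact le_of_lt (lt_of_le_of_lt ht hy01)
        · exact le_of_lt ht.2
      calc ν (Iic y0) < ν (Iic y0) + ν (Ioo y0 y1) :=
            ENNReal.lt_add_right (measure_ne_top ν _) (hν y0 y1 hy0 hy1 hy01).ne'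
        _ = ν (Iic y0 ∪ Ioo y0 y1) := (measure_union hdisj measurableSet_Ioo).symm
        _ ≤ ν (Iic y1) := measure_mono hsub
    -- hence there is a point in the y1-set missing from the y0-set
    have hns : ¬ (Xge X c y1 (k y1) ⊆ Xge X c y0 (k y0)) := fun h =>
      absurd (measure_mono h) (not_le.mpr hμlt)
    obtain ⟨z, hz1, hz0⟩ := Set.not_subset.mp hns
    rw [hXge] at hz1
    obtain ⟨hzX, hz1'⟩ := hz1
    intro x hx
    rw [hXge] at hx
    obtain ⟨hxX, hx0'⟩ := hx
    -- z ∉ Xge y0 (k y0), but z ∈ X, so g y0 (I z) < k y0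
    have hzlt : g y0 (I z) < k y0 := by
      by_contra h
      exact hz0 (by rw [hXge]; exact ⟨hzX, not_lt.mp h⟩)
    have hIlt : I x < I z := (hganti y0).lt_iff_gt.mp (lt_of_lt_of_le hzlt hx0')
    have hkey : k y1 < g y1 (I x) := lt_of_le_of_lt hz1' ((hganti y1) hIlt)
    refine ⟨⟨hxX, ?_⟩, ?_⟩
    · rw [hderiv]; exact le_of_lt hkey
    · rintro ⟨_, hxe⟩
      rw [hderiv] at hxe
      exact absurd hxe (ne_of_gt hkey)

end
end

section
/- In the quarter-disk example with entropy functional, nestedness of $(c,\mu,\nu)$ (with $k(y) < 0$, level sets meeting the positive $x_2$-axis) is equivalent to the monotone increase of the intercept function $y \mapsto -k(y)/\cos(y)$; given the ODE $\frac{4}{\pi}\left([-k(y)\tan y - k'(y)]\,L(y,k(y)) + \frac{L^2(y,k(y))}{2}\right) = \bar\nu(y)$, this monotonicity is equivalent to the pointwise inequality $\frac{2}{\pi} L^2(y,k(y)) \leq \bar\nu(y)$ for all $y$. -/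
/-! The intercept `-k y / cos y` has derivative `(-k y * tan y - k' y) / cos y`, and the ODE
rewrites `ν̄ y - (2/π) L²` as `(4/π) L (-k y * tan y - k' y)`. Since `cos y > 0` and `L > 0`,
both have the sign of `-k y * tan y - k' y`, and on an open interval monotonicity is
nonnegativity of the derivative. -/

open Set Real

noncomputable section

/-- Length of the mass-splitting level segment in the quarter-disk example. -/
def LQD (y k : ℝ) : ℝ := Real.sqrt (1 - k ^ 2) + k * Real.tan y

theorem IsOpen.monotoneOn_iff_forall_hasDerivAt_nonneg {s : Set ℝ} (hs : IsOpen s)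
    (hconv : Convex ℝ s) {f f' : ℝ → ℝ} (hf : ∀ x ∈ s, HasDerivAt f (f' x) x) :
    MonotoneOn f s ↔ ∀ x ∈ s, 0 ≤ f' x := by
  constructor
  · intro hmono x hx
    rw [← (hf x hx).deriv, ← derivWithin_of_isOpen hs hx]
    exact hmono.derivWithin_nonneg
  · intro hnonneg
    rw [← hs.interior_eq] at hf hnonneg
    refine monotoneOn_of_hasDerivWithinAt_nonneg hconv (fun x hx => ?_)
      (fun x hx => (hf x hx).hasDerivWithinAt) hnonneg
    rw [← hs.interior_eq] at hx
    exact (hf x hx).continuousAt.continuousWithinAt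

theorem hasDerivAt_neg_div_cos {k : ℝ → ℝ} {k' y : ℝ} (hk : HasDerivAt k k' y)
    (hcos : cos y ≠ 0) :
    HasDerivAt (fun y => -k y / cos y) ((-k y * tan y - k') / cos y) y := by
  have h : HasDerivAt (fun y => -k y / cos y)
      ((-k' * cos y - -k y * -sin y) / cos y ^ 2) y :=
    hk.neg.div (Real.hasDerivAt_cos y) hcos
  convert h using 1
  rw [tan_eq_sin_div_cos]
  field_simp
  ring

theorem div_nonneg_iff_of_eq_mul_add_sq {a c L ν p : ℝ} (hc : 0 < c) (hL : 0 < L) (hp : 0 < p)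
    (h : 4 / p * (a * L + L ^ 2 / 2) = ν) :
    0 ≤ a / c ↔ 2 / p * L ^ 2 ≤ ν := by
  have hdiff : ν - 2 / p * L ^ 2 = 4 / p * L * a := by rw [← h]; ring
  rw [le_div_iff₀ hc, zero_mul, ← sub_nonneg (a := ν), hdiff,
    mul_nonneg_iff_of_pos_left (by positivity)]

theorem stmt18_general (k : ℝ → ℝ) (barν : ℝ → ℝ)
    (hkC1 : ∀ y ∈ Ioo 0 (Real.pi / 2), DifferentiableAt ℝ k y)
    (hLpos : ∀ y ∈ Ioo 0 (Real.pi / 2), 0 < LQD y (k y))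
    -- the ODE satisfied by the mass-splitting level `k(y)`
    (hODE : ∀ y ∈ Ioo 0 (Real.pi / 2),
      4 / Real.pi * ((-(k y) * Real.tan y - deriv k y) * LQD y (k y)
        + (LQD y (k y)) ^ 2 / 2) = barν y) :
    MonotoneOn (fun y => -(k y) / Real.cos y) (Ioo 0 (Real.pi / 2)) ↔
      ∀ y ∈ Ioo 0 (Real.pi / 2), 2 / Real.pi * (LQD y (k y)) ^ 2 ≤ barν y := by
  have hcos : ∀ y ∈ Ioo 0 (π / 2), 0 < cos y := fun y hy =>
    cos_pos_of_mem_Ioo ⟨by linarith [hy.1, pi_pos], hy.2⟩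
  rw [isOpen_Ioo.monotoneOn_iff_forall_hasDerivAt_nonneg (convex_Ioo _ _)
    fun y hy => hasDerivAt_neg_div_cos (hkC1 y hy).hasDerivAt (hcos y hy).ne']
  exact forall₂_congr fun y hy =>
    div_nonneg_iff_of_eq_mul_add_sq (hcos y hy) (hLpos y hy) pi_pos (hODE y hy)

theorem stmt18 (k : ℝ → ℝ) (barν : ℝ → ℝ)
    (hkC1 : ∀ y ∈ Ioo 0 (Real.pi / 2), DifferentiableAt ℝ k y)
    (hkneg : ∀ y ∈ Ioo 0 (Real.pi / 2), k y < 0)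
    (hLpos : ∀ y ∈ Ioo 0 (Real.pi / 2), 0 < LQD y (k y))
    -- the ODE satisfied by the mass-splitting level `k(y)`
    (hODE : ∀ y ∈ Ioo 0 (Real.pi / 2),
      4 / Real.pi * ((-(k y) * Real.tan y - deriv k y) * LQD y (k y)
        + (LQD y (k y)) ^ 2 / 2) = barν y) :
    MonotoneOn (fun y => -(k y) / Real.cos y) (Ioo 0 (Real.pi / 2)) ↔
      ∀ y ∈ Ioo 0 (Real.pi / 2), 2 / Real.pi * (LQD y (k y)) ^ 2 ≤ barν y :=
  stmt18_general k barν hkC1 hLpos hODE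

end
end
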